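/- Assume the highest root θ is fundamental and let α_θ be the unique simple root with (θ, α_θ) ≠ 0 (α_θ is then a long root). Let w ∈ W satisfy w(θ) = α_θ and have minimal length among all elements of W taking θ to α_θ. Then w⁻¹ permutes the set of simple roots orthogonal to α_θ: for every β ∈ Π with (β, α_θ) = 0, one has w⁻¹(β) ∈ Π and (w⁻¹(β), α_θ) = 0. -/

import Mathlib

open scoped InnerProductSpace

/-- An irreducible reduced crystallographic root system, spanning a finite-dimensional
real inner product space, together with a fixed base (set of simple roots) and the
coefficient function expressing each root in the base. -/
structure RootSystemData (V : Type) [NormedAddCommGroup V] [InnerProductSpace ℝ V]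
    [FiniteDimensional ℝ V] where
  roots : Set V
  finite : roots.Finite
  nonzero : ∀ γ ∈ roots, γ ≠ 0
  spans : Submodule.span ℝ roots = ⊤
  reflClosed : ∀ α ∈ roots, ∀ β ∈ roots, β - (2 * ⟪β, α⟫_ℝ / ⟪α, α⟫_ℝ) • α ∈ roots
  crystal : ∀ α ∈ roots, ∀ β ∈ roots, ∃ k : ℤ, 2 * ⟪β, α⟫_ℝ / ⟪α, α⟫_ℝ = (k : ℝ)
  reduced : ∀ α ∈ roots, ∀ t : ℝ, t • α ∈ roots → t = 1 ∨ t = -1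
  irred : ∀ A B : Set V, roots = A ∪ B → (∀ a ∈ A, ∀ b ∈ B, ⟪a, b⟫_ℝ = 0) →
    A = ∅ ∨ B = ∅
  simples : Finset V
  simples_sub : ↑simples ⊆ roots
  simples_indep : LinearIndependent ℝ (Subtype.val : {x : V // x ∈ simples} → V)
  coeff : V → V → ℤ
  coeff_spec : ∀ γ ∈ roots, γ = ∑ α ∈ simples, coeff γ α • α
  coeff_sign : ∀ γ ∈ roots, (∀ α ∈ simples, 0 ≤ coeff γ α) ∨ (∀ α ∈ simples, coeff γ α ≤ 0)

namespace RootSystemData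

variable {V : Type} [NormedAddCommGroup V] [InnerProductSpace ℝ V] [FiniteDimensional ℝ V]
variable (R : RootSystemData V)

/-- The set of positive roots `Δ⁺` (w.r.t. the base `simples`). -/
def posRoots : Set V := {γ | γ ∈ R.roots ∧ ∀ α ∈ R.simples, 0 ≤ R.coeff γ α}

/-- The partial order `μ ≼ ν`: `ν - μ` is a nonnegative integral combination of simple roots. -/
def rle (μ ν : V) : Prop := ∃ c : V → ℕ, ν - μ = ∑ α ∈ R.simples, (c α : ℤ) • α

/-- `θ` is the highest root. -/
def IsHighest (θ : V) : Prop := θ ∈ R.posRoots ∧ ∀ γ ∈ R.roots, R.rle γ θ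

/-- `γ` is a long root: a root of maximal length. -/
def IsLong (γ : V) : Prop := γ ∈ R.roots ∧ ∀ γ' ∈ R.roots, ‖γ'‖ ≤ ‖γ‖

/-- `I` is an upper ideal of `(Δ⁺, ≼)`. -/
def IsUpperIdeal (I : Set V) : Prop :=
  I ⊆ R.posRoots ∧ ∀ ν ∈ I, ∀ γ ∈ R.posRoots, R.rle ν γ → γ ∈ I

/-- `I` is an abelian upper ideal of `(Δ⁺, ≼)`. -/
def IsAbelianIdeal (I : Set V) : Prop :=
  R.IsUpperIdeal I ∧ ∀ γ₁ ∈ I, ∀ γ₂ ∈ I, γ₁ + γ₂ ∉ R.roots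

/-- The set of minimal elements of `M ⊆ Δ⁺` w.r.t. `≼`. -/
def minSet (M : Set V) : Set V := {γ | γ ∈ M ∧ ∀ ν ∈ M, R.rle ν γ → ν = γ}

/-- The set of maximal elements of `M ⊆ Δ⁺` w.r.t. `≼`. -/
def maxSet (M : Set V) : Set V := {γ | γ ∈ M ∧ ∀ ν ∈ M, R.rle γ ν → ν = γ}

/-- `S(I) = {α ∈ Π : ∃ γ ∈ min(I), γ - α ∈ Δ⁺ ∪ {0}}`; the complement `Π ∖ S(I)` is the
set of simple roots of the standard Levi subalgebra of the normaliser of the ideal `I`. -/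
def normS (I : Set V) : Set V :=
  {α | α ∈ R.simples ∧ ∃ γ ∈ R.minSet I, (γ - α ∈ R.posRoots ∨ γ = α)}

/-- `H = {γ ∈ Δ⁺ : (γ, θ) ≠ 0}`. -/
def Hset (θ : V) : Set V := {γ | γ ∈ R.posRoots ∧ ⟪γ, θ⟫_ℝ ≠ 0}

/-- `deg_S(γ) = Σ_{α ∈ S} [γ:α]`. -/
def degS (S : Finset V) (γ : V) : ℤ := ∑ α ∈ S, R.coeff γ α

/-- `I_S = {γ ∈ Δ⁺ : deg_S(γ) ≥ ⌊d(S)/2⌋ + 1}`, where `d(S) = deg_S(θ)`: the abelian ideal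
`g(≥ ⌊hot(p)/2⌋ + 1)` associated with the standard parabolic subalgebra `p(S)`. -/
def idealS (S : Finset V) (θ : V) : Set V :=
  {γ | γ ∈ R.posRoots ∧ R.degS S θ / 2 + 1 ≤ R.degS S γ}

/-- The highest root `θ` is fundamental with `α_θ` the unique simple root not
orthogonal to `θ`, and `(θ, α_θ∨) = 1`. -/
def IsFundamental (θ αθ : V) : Prop :=
  αθ ∈ R.simples ∧ ⟪θ, αθ⟫_ℝ ≠ 0 ∧ (∀ β ∈ R.simples, ⟪θ, β⟫_ℝ ≠ 0 → β = αθ) ∧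
    2 * ⟪θ, αθ⟫_ℝ / ⟪αθ, αθ⟫_ℝ = 1

end RootSystemData

/-- The reflection `s_α`. -/
noncomputable def rsRefl {V : Type} [NormedAddCommGroup V] [InnerProductSpace ℝ V] (α x : V) : V :=
  x - (2 * ⟪x, α⟫_ℝ / ⟪α, α⟫_ℝ) • α

/-- The element of the Weyl group given by the word `l = [α₁, …, α_m]`,
namely `s_{α₁} ∘ ⋯ ∘ s_{α_m}`; its inverse is `wordMap l.reverse`. -/
noncomputable def wordMap {V : Type} [NormedAddCommGroup V] [InnerProductSpace ℝ V] (l : List V) : V → V :=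
  l.foldr (fun α f => rsRefl α ∘ f) id

/-! Write `w = wordMap l`. Minimality forces `w⁻¹β > 0` for every simple `β ⊥ αθ` (otherwise
`s_β w` is shorter and still sends `θ` to `αθ`) and `wδ > 0` for every simple `δ ≠ αθ` (otherwise
`w s_δ` is). As the simple root `αθ = w(θ - αθ) + wαθ` is not a sum of two positive roots,
`wαθ < 0`; comparing `w⁻¹θ` with `θ - αθ` through the highest root then gives
`w(θ - αθ) = θ`, i.e. `wαθ = αθ - θ`. For a simple `β ⊥ αθ`, the positive root `γ = w⁻¹β`
satisfies `(γ, θ) = (β, αθ) = 0`, so its support avoids `αθ` and `w` does not lower its height;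
since `wγ = β` has height one, `γ` is simple, and `(γ, αθ) = (β, αθ - θ) = 0`. -/

section Reflections

variable {V : Type} [NormedAddCommGroup V] [InnerProductSpace ℝ V]

lemma rsRefl_add (α x y : V) : rsRefl α (x + y) = rsRefl α x + rsRefl α y := by
  simp only [rsRefl, inner_add_left, add_div, mul_add, add_smul]
  abel

lemma rsRefl_smul (α : V) (r : ℝ) (x : V) : rsRefl α (r • x) = r • rsRefl α x := by
  simp only [rsRefl, real_inner_smul_left, smul_sub, smul_smul]
  ring_nf

lemma rsRefl_sub (α x y : V) : rsRefl α (x - y) = rsRefl α x - rsRefl α y := by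
  simp only [rsRefl, inner_sub_left, sub_div, mul_sub, sub_smul]
  abel

lemma rsRefl_of_inner_eq_zero {α x : V} (h : ⟪x, α⟫_ℝ = 0) : rsRefl α x = x := by
  simp [rsRefl, h]

variable {α : V}

lemma inner_rsRefl_rsRefl (hα : α ≠ 0) (x y : V) :
    ⟪rsRefl α x, rsRefl α y⟫_ℝ = ⟪x, y⟫_ℝ := by
  have hαα : ⟪α, α⟫_ℝ ≠ 0 := inner_self_ne_zero.mpr hα
  simp only [rsRefl, inner_sub_left, inner_sub_right, real_inner_smul_left,
    real_inner_smul_right, real_inner_comm α y]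
  field_simp
  ring

lemma rsRefl_rsRefl (hα : α ≠ 0) (x : V) : rsRefl α (rsRefl α x) = x := by
  have hαα : ⟪α, α⟫_ℝ ≠ 0 := inner_self_ne_zero.mpr hα
  have hcoeff : 2 * ⟪x - (2 * ⟪x, α⟫_ℝ / ⟪α, α⟫_ℝ) • α, α⟫_ℝ / ⟪α, α⟫_ℝ =
      -(2 * ⟪x, α⟫_ℝ / ⟪α, α⟫_ℝ) := by
    rw [inner_sub_left, real_inner_smul_left]
    field_simp
    ring
  rw [rsRefl, rsRefl, hcoeff, neg_smul, sub_neg_eq_add, sub_add_cancel]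

lemma rsRefl_rsRefl_eq_conj (hα : α ≠ 0) (μ x : V) :
    rsRefl (rsRefl α μ) x = rsRefl α (rsRefl μ (rsRefl α x)) := by
  have hnorm : ⟪rsRefl α μ, rsRefl α μ⟫_ℝ = ⟪μ, μ⟫_ℝ := inner_rsRefl_rsRefl hα μ μ
  have hinner : ⟪x, rsRefl α μ⟫_ℝ = ⟪rsRefl α x, μ⟫_ℝ := by
    rw [← inner_rsRefl_rsRefl hα (rsRefl α x) μ, rsRefl_rsRefl hα]
  rw [rsRefl.eq_1 (rsRefl α μ) x, hnorm, hinner, rsRefl.eq_1 μ (rsRefl α x), rsRefl_sub,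
    rsRefl_smul, rsRefl_rsRefl hα]

end Reflections

section Words

variable {V : Type} [NormedAddCommGroup V] [InnerProductSpace ℝ V]

lemma wordMap_cons (a : V) (l : List V) (x : V) :
    wordMap (a :: l) x = rsRefl a (wordMap l x) := rfl

lemma wordMap_append (l₁ l₂ : List V) (x : V) :
    wordMap (l₁ ++ l₂) x = wordMap l₁ (wordMap l₂ x) := by
  induction l₁ with
  | nil => rfl
  | cons a l ih => simp only [List.cons_append, wordMap_cons, ih]

noncomputable def wordMapₗ (l : List V) : V →ₗ[ℝ] V where
  toFun := wordMap l
  map_add' x y := by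
    induction l with
    | nil => rfl
    | cons a l ih => simp only [wordMap_cons, ih, rsRefl_add]
  map_smul' r x := by
    induction l with
    | nil => rfl
    | cons a l ih => simp only [wordMap_cons, ih, rsRefl_smul, RingHom.id_apply]

lemma wordMap_sub (l : List V) (x y : V) : wordMap l (x - y) = wordMap l x - wordMap l y :=
  map_sub (wordMapₗ l) x y

lemma wordMap_add (l : List V) (x y : V) : wordMap l (x + y) = wordMap l x + wordMap l y :=
  map_add (wordMapₗ l) x y

variable {l : List V}

lemma inner_wordMap_wordMap (h0 : ∀ a ∈ l, a ≠ 0) (x y : V) :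
    ⟪wordMap l x, wordMap l y⟫_ℝ = ⟪x, y⟫_ℝ := by
  induction l with
  | nil => rfl
  | cons a l ih =>
    rw [wordMap_cons, wordMap_cons, inner_rsRefl_rsRefl (h0 a (by simp)),
      ih fun b hb => h0 b (by simp [hb])]

lemma wordMap_reverse_wordMap (h0 : ∀ a ∈ l, a ≠ 0) (x : V) :
    wordMap l.reverse (wordMap l x) = x := by
  induction l with
  | nil => rfl
  | cons a l ih =>
    rw [List.reverse_cons, wordMap_append, wordMap_cons]
    change wordMap l.reverse (rsRefl a (rsRefl a (wordMap l x))) = x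
    rw [rsRefl_rsRefl (h0 a (by simp))]
    exact ih fun b hb => h0 b (by simp [hb])

lemma wordMap_wordMap_reverse (h0 : ∀ a ∈ l, a ≠ 0) (x : V) :
    wordMap l (wordMap l.reverse x) = x := by
  simpa using wordMap_reverse_wordMap (l := l.reverse) (by simpa using h0) x

end Words

namespace RootSystemData

variable {V : Type} [NormedAddCommGroup V] [InnerProductSpace ℝ V] [FiniteDimensional ℝ V]
variable {R : RootSystemData V} {θ αθ : V}

lemma inner_self_pos {γ : V} (hγ : γ ∈ R.roots) : 0 < ⟪γ, γ⟫_ℝ :=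
  real_inner_self_pos.mpr (R.nonzero γ hγ)

lemma rsRefl_mem_roots {α γ : V} (hα : α ∈ R.roots) (hγ : γ ∈ R.roots) :
    rsRefl α γ ∈ R.roots :=
  R.reflClosed α hα γ hγ

lemma neg_mem_roots {γ : V} (hγ : γ ∈ R.roots) : -γ ∈ R.roots := by
  have hαα : ⟪γ, γ⟫_ℝ ≠ 0 := (inner_self_pos hγ).ne'
  have h := rsRefl_mem_roots hγ hγ
  rwa [rsRefl, mul_div_assoc, div_self hαα, mul_one, two_smul, sub_add_cancel_left] at h

lemma wordMap_mem_roots {l : List V} (hl : ∀ a ∈ l, a ∈ R.roots) {γ : V} (hγ : γ ∈ R.roots) :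
    wordMap l γ ∈ R.roots := by
  induction l with
  | nil => exact hγ
  | cons a l ih =>
    exact rsRefl_mem_roots (hl a (by simp)) (ih fun b hb => hl b (by simp [hb]))

lemma eq_of_sum_zsmul_eq {d e : V → ℤ}
    (h : ∑ α ∈ R.simples, d α • α = ∑ α ∈ R.simples, e α • α) :
    ∀ α ∈ R.simples, d α = e α := by
  have hindep := (linearIndependent_iff'.mp (R.simples_indep.restrict_scalars' ℤ))
    R.simples.attach (fun α => d α - e α)
  have hzero : ∑ α ∈ R.simples.attach, (d α - e α) • (α : V) = 0 := by
    rw [Finset.sum_attach R.simples (fun α => (d α - e α) • α)]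
    simp only [sub_smul, Finset.sum_sub_distrib, h, sub_self]
  intro α hα
  exact sub_eq_zero.mp (hindep hzero ⟨α, hα⟩ (Finset.mem_attach _ _))

lemma coeff_eq_of_eq_sum {γ : V} (hγ : γ ∈ R.roots) {d : V → ℤ}
    (hd : γ = ∑ α ∈ R.simples, d α • α) : ∀ α ∈ R.simples, R.coeff γ α = d α :=
  eq_of_sum_zsmul_eq ((R.coeff_spec γ hγ).symm.trans hd)

lemma coeff_neg {γ : V} (hγ : γ ∈ R.roots) :
    ∀ α ∈ R.simples, R.coeff (-γ) α = -R.coeff γ α :=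
  coeff_eq_of_eq_sum (neg_mem_roots hγ) (by
    simp only [neg_smul, Finset.sum_neg_distrib, ← R.coeff_spec γ hγ])

lemma coeff_add {γ δ : V} (hγ : γ ∈ R.roots) (hδ : δ ∈ R.roots) (hγδ : γ + δ ∈ R.roots) :
    ∀ α ∈ R.simples, R.coeff (γ + δ) α = R.coeff γ α + R.coeff δ α :=
  coeff_eq_of_eq_sum hγδ (by
    simp only [add_smul, Finset.sum_add_distrib, ← R.coeff_spec γ hγ, ← R.coeff_spec δ hδ])

lemma coeff_sub {γ δ : V} (hγ : γ ∈ R.roots) (hδ : δ ∈ R.roots) (hγδ : γ - δ ∈ R.roots) :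
    ∀ α ∈ R.simples, R.coeff (γ - δ) α = R.coeff γ α - R.coeff δ α :=
  coeff_eq_of_eq_sum hγδ (by
    simp only [sub_smul, Finset.sum_sub_distrib, ← R.coeff_spec γ hγ, ← R.coeff_spec δ hδ])

open scoped Classical in
lemma coeff_sub_zsmul {γ β : V} (hγ : γ ∈ R.roots) (hβ : β ∈ R.simples) (k : ℤ)
    (hγβ : γ - k • β ∈ R.roots) :
    ∀ α ∈ R.simples, R.coeff (γ - k • β) α = R.coeff γ α - if α = β then k else 0 := by
  refine coeff_eq_of_eq_sum hγβ ?_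
  simp only [sub_smul, Finset.sum_sub_distrib, ← R.coeff_spec γ hγ, ite_smul, zero_smul,
    Finset.sum_ite_eq', if_pos hβ]

open scoped Classical in
lemma coeff_of_mem_simples {β : V} (hβ : β ∈ R.simples) :
    ∀ α ∈ R.simples, R.coeff β α = if α = β then 1 else 0 :=
  coeff_eq_of_eq_sum (R.simples_sub hβ) (by simp [ite_smul, Finset.sum_ite_eq', hβ])

lemma mem_posRoots_of_mem_simples {β : V} (hβ : β ∈ R.simples) : β ∈ R.posRoots := by
  refine ⟨R.simples_sub hβ, fun α hα => ?_⟩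
  rw [coeff_of_mem_simples hβ α hα]
  split_ifs <;> simp

lemma exists_coeff_ne_zero {γ : V} (hγ : γ ∈ R.roots) : ∃ α ∈ R.simples, R.coeff γ α ≠ 0 := by
  by_contra! h
  apply R.nonzero γ hγ
  rw [R.coeff_spec γ hγ]
  exact Finset.sum_eq_zero fun α hα => by rw [h α hα, zero_smul]

lemma mem_posRoots_or_neg_mem_posRoots {γ : V} (hγ : γ ∈ R.roots) :
    γ ∈ R.posRoots ∨ -γ ∈ R.posRoots := by
  refine (R.coeff_sign γ hγ).imp (fun h => ⟨hγ, h⟩) fun h => ⟨neg_mem_roots hγ, fun α hα => ?_⟩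
  rw [coeff_neg hγ α hα]
  exact neg_nonneg.mpr (h α hα)

lemma neg_notMem_posRoots {γ : V} (hγ : γ ∈ R.posRoots) : -γ ∉ R.posRoots := by
  intro hneg
  obtain ⟨α, hα, hne⟩ := exists_coeff_ne_zero hγ.1
  have := hneg.2 α hα
  rw [coeff_neg hγ.1 α hα] at this
  exact hne (le_antisymm (neg_nonneg.mp this) (hγ.2 α hα))

lemma rle_coeff_le {μ ν : V} (hμ : μ ∈ R.roots) (hν : ν ∈ R.roots) (h : R.rle μ ν) :
    ∀ α ∈ R.simples, R.coeff μ α ≤ R.coeff ν α := by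
  obtain ⟨c, hc⟩ := h
  have hsum : ∑ α ∈ R.simples, (R.coeff ν α - R.coeff μ α) • α =
      ∑ α ∈ R.simples, (c α : ℤ) • α := by
    rw [← hc]
    simp only [sub_smul, Finset.sum_sub_distrib, ← R.coeff_spec ν hν, ← R.coeff_spec μ hμ]
  intro α hα
  have := eq_of_sum_zsmul_eq hsum α hα
  omega

lemma exists_rsRefl_eq_sub_zsmul {α γ : V} (hα : α ∈ R.roots) (hγ : γ ∈ R.roots) :
    ∃ k : ℤ, (k : ℝ) = 2 * ⟪γ, α⟫_ℝ / ⟪α, α⟫_ℝ ∧ rsRefl α γ = γ - k • α := by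
  obtain ⟨k, hk⟩ := R.crystal α hα γ hγ
  exact ⟨k, hk.symm, by rw [rsRefl, hk, Int.cast_smul_eq_zsmul]⟩

lemma rsRefl_mem_posRoots {α γ : V} (hα : α ∈ R.simples) (hγ : γ ∈ R.posRoots) (hne : γ ≠ α) :
    rsRefl α γ ∈ R.posRoots := by
  obtain ⟨k, -, hk⟩ := exists_rsRefl_eq_sub_zsmul (R.simples_sub hα) hγ.1
  have hroot := rsRefl_mem_roots (R.simples_sub hα) hγ.1
  have hcoeff := coeff_sub_zsmul hγ.1 hα k (hk ▸ hroot)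
  refine (mem_posRoots_or_neg_mem_posRoots hroot).resolve_right fun hneg => hne ?_
  have hzero : ∀ β ∈ R.simples, β ≠ α → R.coeff γ β = 0 := by
    intro β hβ hβα
    have h := hneg.2 β hβ
    rw [coeff_neg hroot β hβ, hk, hcoeff β hβ, if_neg hβα] at h
    exact le_antisymm (by omega) (hγ.2 β hβ)
  have hγα : γ = R.coeff γ α • α := by
    conv_lhs => rw [R.coeff_spec γ hγ.1]
    exact Finset.sum_eq_single_of_mem α hα fun β hβ hβα => by rw [hzero β hβ hβα, zero_smul]
  have hpos : (0 : ℝ) ≤ R.coeff γ α := by exact_mod_cast hγ.2 α hα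
  rcases R.reduced α (R.simples_sub hα) (R.coeff γ α)
      (by rw [Int.cast_smul_eq_zsmul, ← hγα]; exact hγ.1) with h | h
  · rw [hγα, show R.coeff γ α = 1 by exact_mod_cast h, one_smul]
  · linarith

/-- The exchange condition. -/
lemma exists_word_eq_rsRefl_comp {l : List V} (hl : ∀ a ∈ l, a ∈ R.simples) {μ : V}
    (hμ : μ ∈ R.posRoots) (hneg : -wordMap l.reverse μ ∈ R.posRoots) :
    ∃ l' : List V, (∀ a ∈ l', a ∈ R.simples) ∧ l'.length + 1 = l.length ∧
      ∀ x, wordMap l' x = rsRefl μ (wordMap l x) := by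
  induction l generalizing μ with
  | nil => exact absurd hneg (neg_notMem_posRoots hμ)
  | cons a l ih =>
    have ha : a ∈ R.simples := hl a (by simp)
    have ha0 : a ≠ 0 := R.nonzero a (R.simples_sub ha)
    have hl' : ∀ b ∈ l, b ∈ R.simples := fun b hb => hl b (by simp [hb])
    by_cases hμa : μ = a
    · subst hμa
      exact ⟨l, hl', rfl, fun x => (rsRefl_rsRefl ha0 _).symm⟩
    · have hrev : wordMap (a :: l).reverse μ = wordMap l.reverse (rsRefl a μ) := by
        rw [List.reverse_cons, wordMap_append]; rfl
      obtain ⟨l', hl'', hlen, hw⟩ :=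
        ih hl' (rsRefl_mem_posRoots ha hμ hμa) (hrev ▸ hneg)
      refine ⟨a :: l', ?_, by simp [hlen], fun x => ?_⟩
      · simpa [ha] using hl''
      · rw [wordMap_cons, hw, rsRefl_rsRefl_eq_conj ha0, rsRefl_rsRefl ha0, wordMap_cons]

lemma exists_word_eq_comp_rsRefl {l : List V} (hl : ∀ a ∈ l, a ∈ R.simples) {δ : V}
    (hδ : δ ∈ R.posRoots) (hneg : -wordMap l δ ∈ R.posRoots) :
    ∃ l' : List V, (∀ a ∈ l', a ∈ R.simples) ∧ l'.length + 1 = l.length ∧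
      ∀ x, wordMap l' x = wordMap l (rsRefl δ x) := by
  obtain ⟨l'', hl'', hlen, hw⟩ := exists_word_eq_rsRefl_comp (l := l.reverse)
    (by simpa using hl) hδ (by rwa [List.reverse_reverse])
  refine ⟨l''.reverse, by simpa using hl'', by simpa using hlen, fun x => ?_⟩
  have h0 : ∀ a ∈ l, a ≠ 0 := fun a ha => R.nonzero a (R.simples_sub (hl a ha))
  have hinv : wordMap l'' (wordMap l (rsRefl δ x)) = x := by
    rw [hw, wordMap_reverse_wordMap h0, rsRefl_rsRefl (R.nonzero δ hδ.1)]
  conv_lhs => rw [← hinv]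
  exact wordMap_reverse_wordMap (fun a ha => R.nonzero a (R.simples_sub (hl'' a ha))) _

lemma sub_mem_roots_of_inner_pos {μ ν : V} (hμ : μ ∈ R.roots) (hν : ν ∈ R.roots)
    (hinner : 0 < ⟪μ, ν⟫_ℝ) (hne : μ ≠ ν) : μ - ν ∈ R.roots := by
  obtain ⟨k, hk, hkμ⟩ := exists_rsRefl_eq_sub_zsmul hν hμ
  obtain ⟨k', hk', hk'ν⟩ := exists_rsRefl_eq_sub_zsmul hμ hν
  have hνν := inner_self_pos hν
  have hμμ := inner_self_pos hμ
  have hkν : (k : ℝ) * ⟪ν, ν⟫_ℝ = 2 * ⟪μ, ν⟫_ℝ := by rw [hk]; field_simp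
  have hk'μ : (k' : ℝ) * ⟪μ, μ⟫_ℝ = 2 * ⟪μ, ν⟫_ℝ := by rw [hk', real_inner_comm]; field_simp
  have hk1 : 1 ≤ k := by exact_mod_cast (show (0 : ℝ) < k by nlinarith)
  have hk'1 : 1 ≤ k' := by exact_mod_cast (show (0 : ℝ) < k' by nlinarith)
  rcases hk1.eq_or_lt with rfl | hk2
  · rw [← one_smul ℤ ν, ← hkμ]
    exact rsRefl_mem_roots hν hμ
  rcases hk'1.eq_or_lt with rfl | hk'2
  · rw [← neg_sub, ← one_smul ℤ μ, ← hk'ν]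
    exact neg_mem_roots (rsRefl_mem_roots hμ hν)
  -- If both Cartan integers are at least `2`, then `‖μ - ν‖² ≤ 0`.
  have hk2' : (2 : ℝ) ≤ k := by exact_mod_cast hk2
  have hk'2' : (2 : ℝ) ≤ k' := by exact_mod_cast hk'2
  have hsq : ⟪μ - ν, μ - ν⟫_ℝ ≤ 0 := by
    rw [real_inner_sub_sub_self]
    nlinarith
  exact absurd (sub_eq_zero.mp (real_inner_self_nonpos.mp hsq)) hne

variable (R) in
def height (γ : V) : ℤ := ∑ α ∈ R.simples, R.coeff γ α

lemma one_le_height {γ : V} (hγ : γ ∈ R.posRoots) : 1 ≤ R.height γ := by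
  obtain ⟨α, hα, hne⟩ := exists_coeff_ne_zero hγ.1
  have hle := Finset.single_le_sum hγ.2 hα
  have := hγ.2 α hα
  unfold height
  omega

lemma height_of_mem_simples {β : V} (hβ : β ∈ R.simples) : R.height β = 1 := by
  classical
  rw [height, Finset.sum_congr rfl (coeff_of_mem_simples hβ), Finset.sum_ite_eq', if_pos hβ]

lemma height_add {γ δ : V} (hγ : γ ∈ R.roots) (hδ : δ ∈ R.roots) (hγδ : γ + δ ∈ R.roots) :
    R.height (γ + δ) = R.height γ + R.height δ := by
  rw [height, Finset.sum_congr rfl (coeff_add hγ hδ hγδ), Finset.sum_add_distrib, height, height]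

lemma add_notMem_simples {γ δ : V} (hγ : γ ∈ R.posRoots) (hδ : δ ∈ R.posRoots)
    (hγδ : γ + δ ∈ R.roots) : γ + δ ∉ R.simples := fun hs => by
  have := height_add hγ.1 hδ.1 hγδ
  rw [height_of_mem_simples hs] at this
  linarith [one_le_height hγ, one_le_height hδ]

lemma mem_simples_of_height_le_one {γ : V} (hγ : γ ∈ R.posRoots) (h : R.height γ ≤ 1) :
    γ ∈ R.simples := by
  obtain ⟨α₀, hα₀, hne⟩ := exists_coeff_ne_zero hγ.1
  have hα₀pos := hγ.2 α₀ hα₀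
  have hzero : ∀ α ∈ R.simples, α ≠ α₀ → R.coeff γ α = 0 := fun α hα hαα₀ => by
    have := Finset.add_le_sum hγ.2 hα hα₀ hαα₀
    have := hγ.2 α hα
    unfold height at h
    omega
  have hone : R.coeff γ α₀ = 1 := by
    have := Finset.single_le_sum hγ.2 hα₀
    unfold height at h
    omega
  have hγα₀ : γ = α₀ := by
    rw [R.coeff_spec γ hγ.1, Finset.sum_eq_single_of_mem α₀ hα₀ fun α hα hαα₀ => by
      rw [hzero α hα hαα₀, zero_smul], hone, one_smul]
  exact hγα₀ ▸ hα₀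

section WordCoefficients

variable {l : List V} (hl : ∀ a ∈ l, a ∈ R.roots)
include hl

lemma coeff_wordMap {μ : V} (hμ : μ ∈ R.roots) : ∀ δ ∈ R.simples,
    R.coeff (wordMap l μ) δ = ∑ α ∈ R.simples, R.coeff μ α * R.coeff (wordMap l α) δ := by
  refine coeff_eq_of_eq_sum (wordMap_mem_roots hl hμ) ?_
  calc wordMap l μ = wordMapₗ l (∑ α ∈ R.simples, R.coeff μ α • α) := by
        rw [← R.coeff_spec μ hμ]; rfl
    _ = ∑ α ∈ R.simples, ∑ δ ∈ R.simples, (R.coeff μ α * R.coeff (wordMap l α) δ) • δ := by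
        simp only [map_sum, map_zsmul, mul_smul, ← Finset.smul_sum]
        refine Finset.sum_congr rfl fun α hα => ?_
        rw [← R.coeff_spec _ (wordMap_mem_roots hl (R.simples_sub hα))]
        rfl
    _ = _ := by rw [Finset.sum_comm]; simp only [Finset.sum_smul]

variable {μ : V} (hμ : μ ∈ R.posRoots)
  (hsupp : ∀ α ∈ R.simples, R.coeff μ α ≠ 0 → wordMap l α ∈ R.posRoots)
include hμ hsupp

lemma wordMap_mem_posRoots : wordMap l μ ∈ R.posRoots := by
  refine ⟨wordMap_mem_roots hl hμ.1, fun δ hδ => ?_⟩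
  rw [coeff_wordMap hl hμ.1 δ hδ]
  refine Finset.sum_nonneg fun α hα => ?_
  by_cases hc : R.coeff μ α = 0
  · simp [hc]
  · exact mul_nonneg (hμ.2 α hα) ((hsupp α hα hc).2 δ hδ)

lemma height_le_height_wordMap : R.height μ ≤ R.height (wordMap l μ) := by
  calc R.height μ ≤ ∑ α ∈ R.simples, R.coeff μ α * R.height (wordMap l α) := by
        refine Finset.sum_le_sum fun α hα => ?_
        by_cases hc : R.coeff μ α = 0
        · simp [hc]
        · exact le_mul_of_one_le_right (hμ.2 α hα) (one_le_height (hsupp α hα hc))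
    _ = R.height (wordMap l μ) := by
        simp only [height, Finset.mul_sum]
        rw [Finset.sum_comm]
        exact Finset.sum_congr rfl fun δ hδ => (coeff_wordMap hl hμ.1 δ hδ).symm

lemma mem_simples_of_wordMap_mem_simples (hsimple : wordMap l μ ∈ R.simples) :
    μ ∈ R.simples :=
  mem_simples_of_height_le_one hμ
    ((height_le_height_wordMap hl hμ hsupp).trans (height_of_mem_simples hsimple).le)

end WordCoefficients

lemma add_notMem_roots_of_isHighest (hθ : R.IsHighest θ) {γ : V} (hγ : γ ∈ R.posRoots) :
    θ + γ ∉ R.roots := fun hθγ => by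
  obtain ⟨α, hα, hne⟩ := exists_coeff_ne_zero hγ.1
  have hle := rle_coeff_le hθγ hθ.1.1 (hθ.2 _ hθγ) α hα
  rw [coeff_add hθ.1.1 hγ.1 hθγ α hα] at hle
  exact hne (le_antisymm (by omega) (hγ.2 α hα))

namespace IsFundamental

variable (hfund : R.IsFundamental θ αθ)
include hfund

lemma inner_theta_eq_zero {β : V} (hβ : β ∈ R.simples) (hne : β ≠ αθ) : ⟪θ, β⟫_ℝ = 0 :=
  not_not.mp fun h => hne (hfund.2.2.1 β hβ h)

lemma inner_alpha_alpha_pos : 0 < ⟪αθ, αθ⟫_ℝ :=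
  inner_self_pos (R.simples_sub hfund.1)

lemma inner_theta_alpha : ⟪θ, αθ⟫_ℝ = ⟪αθ, αθ⟫_ℝ / 2 := by
  have h := hfund.2.2.2
  rw [div_eq_one_iff_eq hfund.inner_alpha_alpha_pos.ne'] at h
  linarith

lemma inner_theta_eq_coeff_mul {γ : V} (hγ : γ ∈ R.roots) :
    ⟪θ, γ⟫_ℝ = R.coeff γ αθ * (⟪αθ, αθ⟫_ℝ / 2) := by
  conv_lhs => rw [R.coeff_spec γ hγ]
  simp only [inner_sum, ← Int.cast_smul_eq_zsmul ℝ, real_inner_smul_right]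
  rw [Finset.sum_eq_single_of_mem αθ hfund.1 fun β hβ hne => by
    rw [hfund.inner_theta_eq_zero hβ hne, mul_zero], hfund.inner_theta_alpha]

lemma coeff_alpha_eq_of_inner_theta {γ : V} (hγ : γ ∈ R.roots) {n : ℤ}
    (h : ⟪θ, γ⟫_ℝ = n * (⟪αθ, αθ⟫_ℝ / 2)) : R.coeff γ αθ = n := by
  rw [hfund.inner_theta_eq_coeff_mul hγ] at h
  exact_mod_cast mul_right_cancel₀ (by linarith [hfund.inner_alpha_alpha_pos]) h

lemma inner_theta_nonneg {γ : V} (hγ : γ ∈ R.posRoots) : 0 ≤ ⟪θ, γ⟫_ℝ := by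
  rw [hfund.inner_theta_eq_coeff_mul hγ.1]
  have := hfund.inner_alpha_alpha_pos
  have : (0 : ℝ) ≤ R.coeff γ αθ := by exact_mod_cast hγ.2 αθ hfund.1
  positivity

lemma one_le_coeff_theta_alpha (hθ : θ ∈ R.roots) : 1 ≤ R.coeff θ αθ := by
  have hθθ := inner_self_pos hθ
  rw [hfund.inner_theta_eq_coeff_mul hθ] at hθθ
  have : (0 : ℝ) < R.coeff θ αθ :=
    pos_of_mul_pos_left hθθ (by linarith [hfund.inner_alpha_alpha_pos])
  exact_mod_cast this

lemma theta_sub_alpha_mem_posRoots (hθ : θ ∈ R.posRoots) : θ - αθ ∈ R.posRoots := by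
  have hroot : θ - αθ ∈ R.roots := by
    have h := rsRefl_mem_roots (R.simples_sub hfund.1) hθ.1
    rwa [rsRefl, hfund.2.2.2, one_smul] at h
  have hcoeff := hfund.one_le_coeff_theta_alpha hθ.1
  refine ⟨hroot, fun β hβ => ?_⟩
  rw [coeff_sub hθ.1 (R.simples_sub hfund.1) hroot β hβ, coeff_of_mem_simples hfund.1 β hβ]
  split_ifs with h
  · subst h; omega
  · simpa using hθ.2 β hβ

lemma coeff_theta_alpha_eq_two (hθ : R.IsHighest θ) : R.coeff θ αθ = 2 := by
  set c := R.coeff θ αθ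
  have hA := hfund.inner_alpha_alpha_pos
  have hθθ : ⟪θ, θ⟫_ℝ = c * (⟪αθ, αθ⟫_ℝ / 2) := hfund.inner_theta_eq_coeff_mul hθ.1.1
  have hc1 : 1 ≤ c := hfund.one_le_coeff_theta_alpha hθ.1.1
  obtain ⟨k, hk, hsk⟩ := exists_rsRefl_eq_sub_zsmul hθ.1.1 (R.simples_sub hfund.1)
  -- `k = (αθ, θ∨)` and `(θ, θ) = c (αθ, αθ) / 2`, so `k c = 2`; if `c = 1`, then `k = 2` and
  -- `-s_θ αθ = θ + (θ - αθ)` would be a root above `θ`.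
  have hkc : k * c = 2 := by
    have : (k : ℝ) * c = 2 := by
      rw [hk, real_inner_comm, hfund.inner_theta_alpha, hθθ]
      field_simp
    exact_mod_cast this
  have hc2 : c ≤ 2 := Int.le_of_dvd two_pos ⟨k, by rw [← hkc, mul_comm]⟩
  rcases (show c = 1 ∨ c = 2 by omega) with h1 | h2
  · exfalso
    have hk2 : k = 2 := by simpa [h1] using hkc
    apply add_notMem_roots_of_isHighest hθ (hfund.theta_sub_alpha_mem_posRoots hθ.1)
    have := neg_mem_roots (hsk ▸ rsRefl_mem_roots hθ.1.1 (R.simples_sub hfund.1))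
    rwa [hk2, neg_sub, two_zsmul, add_sub_assoc] at this
  · exact h2

end IsFundamental

variable (R) in
def IsMinimalWord (θ αθ : V) (l : List V) : Prop :=
  (∀ α ∈ l, α ∈ R.simples) ∧ wordMap l θ = αθ ∧
    ∀ l' : List V, (∀ α ∈ l', α ∈ R.simples) → wordMap l' θ = αθ → l.length ≤ l'.length

namespace IsMinimalWord

variable {l : List V} (hl : R.IsMinimalWord θ αθ l)
include hl

lemma mem_roots : ∀ a ∈ l, a ∈ R.roots := fun a ha => R.simples_sub (hl.1 a ha)

lemma ne_zero : ∀ a ∈ l, a ≠ 0 := fun a ha => R.nonzero a (hl.mem_roots a ha)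

lemma inner_wordMap_wordMap (x y : V) : ⟪wordMap l x, wordMap l y⟫_ℝ = ⟪x, y⟫_ℝ :=
  _root_.inner_wordMap_wordMap hl.ne_zero x y

lemma wordMap_reverse_mem_posRoots {β : V} (hβ : β ∈ R.simples) (horth : ⟪αθ, β⟫_ℝ = 0) :
    wordMap l.reverse β ∈ R.posRoots := by
  have hroot := wordMap_mem_roots (fun a ha => hl.mem_roots a (List.mem_reverse.mp ha))
    (R.simples_sub hβ)
  refine (mem_posRoots_or_neg_mem_posRoots hroot).resolve_right fun hneg => ?_
  obtain ⟨l', hl', hlen, hw'⟩ :=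
    exists_word_eq_rsRefl_comp hl.1 (mem_posRoots_of_mem_simples hβ) hneg
  have := hl.2.2 l' hl' (by rw [hw', hl.2.1, rsRefl_of_inner_eq_zero horth])
  omega

lemma wordMap_mem_posRoots_of_inner_eq_zero {δ : V} (hδ : δ ∈ R.simples)
    (horth : ⟪θ, δ⟫_ℝ = 0) : wordMap l δ ∈ R.posRoots := by
  refine (mem_posRoots_or_neg_mem_posRoots (wordMap_mem_roots hl.mem_roots (R.simples_sub hδ)))
    |>.resolve_right fun hneg => ?_
  obtain ⟨l', hl', hlen, hw'⟩ :=
    exists_word_eq_comp_rsRefl hl.1 (mem_posRoots_of_mem_simples hδ) hneg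
  have := hl.2.2 l' hl' (by rw [hw', rsRefl_of_inner_eq_zero horth, hl.2.1])
  omega

variable (hfund : R.IsFundamental θ αθ)
include hfund

lemma wordMap_mem_posRoots_of_ne {δ : V} (hδ : δ ∈ R.simples) (hne : δ ≠ αθ) :
    wordMap l δ ∈ R.posRoots :=
  hl.wordMap_mem_posRoots_of_inner_eq_zero hδ (hfund.inner_theta_eq_zero hδ hne)

lemma wordMap_mem_posRoots_of_coeff_alpha_eq_zero {μ : V} (hμ : μ ∈ R.posRoots)
    (hμα : R.coeff μ αθ = 0) : wordMap l μ ∈ R.posRoots :=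
  wordMap_mem_posRoots hl.mem_roots hμ fun δ hδ hne =>
    hl.wordMap_mem_posRoots_of_ne hfund hδ (by rintro rfl; exact hne hμα)

lemma neg_wordMap_alpha_mem_posRoots (hθ : θ ∈ R.posRoots) :
    -wordMap l αθ ∈ R.posRoots := by
  have hroot := wordMap_mem_roots hl.mem_roots (R.simples_sub hfund.1)
  refine (mem_posRoots_or_neg_mem_posRoots hroot).resolve_left fun hpos => ?_
  have hθα : wordMap l (θ - αθ) ∈ R.posRoots := by
    refine wordMap_mem_posRoots hl.mem_roots (hfund.theta_sub_alpha_mem_posRoots hθ)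
      fun δ hδ _ => ?_
    by_cases hδα : δ = αθ
    · rwa [hδα]
    · exact hl.wordMap_mem_posRoots_of_ne hfund hδ hδα
  have hsum : wordMap l (θ - αθ) + wordMap l αθ = αθ := by
    rw [← wordMap_add, sub_add_cancel, hl.2.1]
  exact add_notMem_simples hθα hpos (by rw [hsum]; exact R.simples_sub hfund.1)
    (by rw [hsum]; exact hfund.1)

lemma wordMap_theta_sub_alpha (hθ : R.IsHighest θ) : wordMap l (θ - αθ) = θ := by
  set φ := wordMap l.reverse θ
  have hA := hfund.inner_alpha_alpha_pos
  have hαr := R.simples_sub hfund.1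
  have hφ : wordMap l φ = θ := wordMap_wordMap_reverse hl.ne_zero θ
  have hφroot : φ ∈ R.roots := by
    rw [← wordMap_reverse_wordMap hl.ne_zero φ, hφ]
    exact wordMap_mem_roots (fun a ha => hl.mem_roots a (List.mem_reverse.mp ha)) hθ.1.1
  have hθφ : ⟪θ, φ⟫_ℝ = ⟪αθ, αθ⟫_ℝ / 2 := by
    rw [← hl.inner_wordMap_wordMap, hl.2.1, hφ, real_inner_comm, hfund.inner_theta_alpha]
  have hφα : ⟪αθ, φ⟫_ℝ ≤ 0 := by
    have := hfund.inner_theta_nonneg (hl.neg_wordMap_alpha_mem_posRoots hfund hθ.1)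
    rw [real_inner_comm, ← hl.inner_wordMap_wordMap, hφ]
    rwa [inner_neg_right, neg_nonneg] at this
  have hθα := hfund.theta_sub_alpha_mem_posRoots hθ.1
  suffices hφeq : φ = θ - αθ by rw [← hφeq, hφ]
  by_contra hne
  have hψroot : θ - αθ - φ ∈ R.roots := sub_mem_roots_of_inner_pos hθα.1 hφroot
    (by rw [inner_sub_left, hθφ]; linarith) (Ne.symm hne)
  have hcoeff : ∀ β ∈ R.simples,
      R.coeff (θ - αθ - φ) β = R.coeff θ β - R.coeff αθ β - R.coeff φ β := fun β hβ => by
    rw [coeff_sub hθα.1 hφroot hψroot β hβ, coeff_sub hθ.1.1 hαr hθα.1 β hβ]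
  have hψα : R.coeff (θ - αθ - φ) αθ = 0 := by
    rw [hcoeff αθ hfund.1, hfund.coeff_theta_alpha_eq_two hθ,
      coeff_of_mem_simples hfund.1 αθ hfund.1, if_pos rfl,
      hfund.coeff_alpha_eq_of_inner_theta hφroot (n := 1) (by rw [hθφ]; simp)]
    norm_num
  have hψ : θ - αθ - φ ∈ R.posRoots := by
    refine ⟨hψroot, fun β hβ => ?_⟩
    by_cases hβα : β = αθ
    · rw [hβα, hψα]
    · rw [hcoeff β hβ, coeff_of_mem_simples hfund.1 β hβ, if_neg hβα]
      linarith [rle_coeff_le hφroot hθ.1.1 (hθ.2 φ hφroot) β hβ]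
  -- `w(θ - αθ) = θ + w(θ - αθ - φ)` would be a root above `θ`.
  apply add_notMem_roots_of_isHighest hθ
    (hl.wordMap_mem_posRoots_of_coeff_alpha_eq_zero hfund hψ hψα)
  rw [wordMap_sub, hφ, add_sub_cancel]
  exact wordMap_mem_roots hl.mem_roots hθα.1

lemma wordMap_alpha (hθ : R.IsHighest θ) : wordMap l αθ = αθ - θ := by
  calc wordMap l αθ = wordMap l θ - wordMap l (θ - αθ) := by rw [← wordMap_sub, sub_sub_cancel]
    _ = αθ - θ := by rw [hl.2.1, hl.wordMap_theta_sub_alpha hfund hθ]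

lemma wordMap_reverse_mem_simples {β : V} (hβ : β ∈ R.simples) (hβα : ⟪β, αθ⟫_ℝ = 0) :
    wordMap l.reverse β ∈ R.simples := by
  set γ := wordMap l.reverse β
  have hγβ : wordMap l γ = β := wordMap_wordMap_reverse hl.ne_zero β
  have hγ : γ ∈ R.posRoots := hl.wordMap_reverse_mem_posRoots hβ (by rwa [real_inner_comm])
  have hγα : R.coeff γ αθ = 0 := hfund.coeff_alpha_eq_of_inner_theta hγ.1
    (by rw [← hl.inner_wordMap_wordMap, hl.2.1, hγβ, real_inner_comm, hβα]; simp)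
  exact mem_simples_of_wordMap_mem_simples hl.mem_roots hγ
    (fun δ hδ hne => hl.wordMap_mem_posRoots_of_ne hfund hδ (by rintro rfl; exact hne hγα))
    (hγβ ▸ hβ)

lemma inner_wordMap_reverse_alpha (hθ : R.IsHighest θ) {β : V} (hβ : β ∈ R.simples)
    (hβα : ⟪β, αθ⟫_ℝ = 0) : ⟪wordMap l.reverse β, αθ⟫_ℝ = 0 := by
  have hβne : β ≠ αθ := by
    rintro rfl
    exact hfund.inner_alpha_alpha_pos.ne' hβα
  rw [← hl.inner_wordMap_wordMap, wordMap_wordMap_reverse hl.ne_zero, hl.wordMap_alpha hfund hθ,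
    inner_sub_right, hβα, real_inner_comm, hfund.inner_theta_eq_zero hβ hβne, sub_zero]

end IsMinimalWord

end RootSystemData

/-- Proposition 2.5, key step: if `θ` is fundamental and `w ∈ W` is the
minimal length element with `w(θ) = α_θ`, then `w⁻¹` permutes the simple roots orthogonal
to `α_θ`: for `β ∈ Π` with `(β, α_θ) = 0`, one has `w⁻¹(β) ∈ Π` and `(w⁻¹(β), α_θ) = 0`. -/
theorem stmt4 {V : Type} [NormedAddCommGroup V] [InnerProductSpace ℝ V] [FiniteDimensional ℝ V]
    (R : RootSystemData V) (θ αθ : V) (hθ : R.IsHighest θ)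
    (hfund : R.IsFundamental θ αθ)
    (l : List V) (hl : ∀ α ∈ l, α ∈ R.simples) (hw : wordMap l θ = αθ)
    (hmin : ∀ l' : List V, (∀ α ∈ l', α ∈ R.simples) → wordMap l' θ = αθ →
      l.length ≤ l'.length) :
    ∀ β ∈ R.simples, ⟪β, αθ⟫_ℝ = 0 →
      wordMap l.reverse β ∈ R.simples ∧ ⟪wordMap l.reverse β, αθ⟫_ℝ = 0 := by
  intro β hβ hβα
  have hword : R.IsMinimalWord θ αθ l := ⟨hl, hw, hmin⟩
  exact ⟨hword.wordMap_reverse_mem_simples hfund hβ hβα,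
    hword.inner_wordMap_reverse_alpha hfund hθ hβ hβα⟩
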